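/- arXiv:0807.3024 — 4 statements merged into one kernel-verified Lean document; each statement's English description precedes it below -/
import Mathlib

section
/- If a sequence of real numbers (x_k) satisfies the recursion x_{k+1} = 2 x_k x_{k-1} - x_{k-2}, then the quantity I_k = x_{k+1}² + x_k² + x_{k-1}² - 2 x_{k+1} x_k x_{k-1} - 1 is independent of k, i.e., I_{k+1} = I_k for all k. -/
theorem trace_map_invariant_independent_of_k (x : ℕ → ℝ)
    (hrec : ∀ k : ℕ, x (k + 3) = 2 * x (k + 2) * x (k + 1) - x k) :
    ∀ k : ℕ,
      x (k + 3) ^ 2 + x (k + 2) ^ 2 + x (k + 1) ^ 2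
          - 2 * x (k + 3) * x (k + 2) * x (k + 1) - 1 =
        x (k + 2) ^ 2 + x (k + 1) ^ 2 + x k ^ 2
          - 2 * x (k + 2) * x (k + 1) * x k - 1 := by
  intro k
  rw [hrec k]
  ring
end

section
/- For a, b > 0 and E ∈ ℝ, the traces x_1 = E/(2a), x_2 = (E² - a² - b²)/(2ab), x_3 = (E³ - 2Ea² - Eb²)/(2a²b) of the off-diagonal Fibonacci transfer matrices satisfy I(x_3, x_2, x_1) = (a² + b²)²/(4a²b²) - 1, where I(x,y,z) = x² + y² + z² - 2xyz - 1. -/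
/-- The Fricke–Vogt invariant. -/
def frickeVogt (p : ℝ × ℝ × ℝ) : ℝ :=
  p.1 ^ 2 + p.2.1 ^ 2 + p.2.2 ^ 2 - 2 * p.1 * p.2.1 * p.2.2 - 1

theorem offdiag_fibonacci_invariant_value (a b E : ℝ) (ha : 0 < a) (hb : 0 < b) :
    frickeVogt ((E ^ 3 - 2 * E * a ^ 2 - E * b ^ 2) / (2 * a ^ 2 * b),
        (E ^ 2 - a ^ 2 - b ^ 2) / (2 * a * b), E / (2 * a)) =
      (a ^ 2 + b ^ 2) ^ 2 / (4 * a ^ 2 * b ^ 2) - 1 := by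
  have ha' : a ≠ 0 := ha.ne'
  have hb' : b ≠ 0 := hb.ne'
  unfold frickeVogt
  field_simp
  ring
end

section
/- Suppose x_{k-1}, x_k, x_{k+1} are real numbers with |x_{k-1}| ≤ 1, |x_{k+1}| ≤ 1 and x_{k+1}² + x_k² + x_{k-1}² - 2 x_{k+1} x_k x_{k-1} - 1 = C with C ≥ 0. Then |x_k| ≤ 1 + √C. -/
theorem trace_bound_from_invariant (xm x xp C : ℝ) (hC : 0 ≤ C)
    (hm : |xm| ≤ 1) (hp : |xp| ≤ 1)
    (hinv : xp ^ 2 + x ^ 2 + xm ^ 2 - 2 * xp * x * xm - 1 = C) :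
    |x| ≤ 1 + Real.sqrt C := by
  have hp2 : xp ^ 2 ≤ 1 := by
    have := abs_nonneg xp
    nlinarith [sq_abs xp]
  have hm2 : xm ^ 2 ≤ 1 := by
    have := abs_nonneg xm
    nlinarith [sq_abs xm]
  set u := Real.sqrt (1 - xp ^ 2) with hu
  set v := Real.sqrt (1 - xm ^ 2) with hv
  have hu0 : 0 ≤ u := Real.sqrt_nonneg _
  have hv0 : 0 ≤ v := Real.sqrt_nonneg _
  have hu2 : u ^ 2 = 1 - xp ^ 2 := Real.sq_sqrt (by linarith)
  have hv2 : v ^ 2 = 1 - xm ^ 2 := Real.sq_sqrt (by linarith)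
  have hd0 : 0 ≤ (1 - xp ^ 2) * (1 - xm ^ 2) := mul_nonneg (by linarith) (by linarith)
  -- key identity
  have hsq : (x - xp * xm) ^ 2 = C + (1 - xp ^ 2) * (1 - xm ^ 2) := by
    linear_combination hinv
  have habs : |x - xp * xm| = Real.sqrt (C + (1 - xp ^ 2) * (1 - xm ^ 2)) := by
    rw [← Real.sqrt_sq_eq_abs, hsq]
  have hsC : 0 ≤ Real.sqrt C := Real.sqrt_nonneg _
  have hsC2 : Real.sqrt C ^ 2 = C := Real.sq_sqrt hC
  -- sqrt subadditivity
  have hsub : Real.sqrt (C + (1 - xp ^ 2) * (1 - xm ^ 2)) ≤ Real.sqrt C + u * v := by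
    have h1 : C + (1 - xp ^ 2) * (1 - xm ^ 2) ≤ (Real.sqrt C + u * v) ^ 2 := by
      nlinarith [mul_nonneg (mul_nonneg hu0 hv0) hsC]
    calc Real.sqrt (C + (1 - xp ^ 2) * (1 - xm ^ 2))
        ≤ Real.sqrt ((Real.sqrt C + u * v) ^ 2) := Real.sqrt_le_sqrt h1
      _ = Real.sqrt C + u * v := by
          rw [Real.sqrt_sq (by positivity)]
  -- |xp*xm| + u*v ≤ 1
  have hcs : |xp * xm| + u * v ≤ 1 := by
    rw [abs_mul]
    nlinarith [sq_nonneg (|xp| * v - |xm| * u), sq_abs xp, sq_abs xm,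
      abs_nonneg xp, abs_nonneg xm]
  have htri : |x| ≤ |x - xp * xm| + |xp * xm| := by
    calc |x| = |(x - xp * xm) + xp * xm| := by ring_nf
      _ ≤ |x - xp * xm| + |xp * xm| := abs_add_le _ _
  calc |x| ≤ |x - xp * xm| + |xp * xm| := htri
    _ = Real.sqrt (C + (1 - xp ^ 2) * (1 - xm ^ 2)) + |xp * xm| := by rw [habs]
    _ ≤ (Real.sqrt C + u * v) + |xp * xm| := by linarith
    _ ≤ 1 + Real.sqrt C := by linarith
end

section
/- Suppose (V_n) is a sequence of nonzero vectors in ℝ² and there exist τ ≥ 1, a strictly increasing sequence of indices (n_k), and matrices M_k ∈ SL(2,ℝ) with |Tr M_k| ≤ 2τ such that V_{n_k} = M_k V_0 and V_{2n_k} = M_k² V_0 for all k. Then V_n does not converge to 0 as n → ∞. -/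
open Filter Topology

/-- Cayley–Hamilton for 2×2 matrices. -/
lemma cayley_fin_two (A : Matrix (Fin 2) (Fin 2) ℝ) :
    A * A = A.trace • A - A.det • (1 : Matrix (Fin 2) (Fin 2) ℝ) := by
  ext i j
  fin_cases i <;> fin_cases j <;>
    simp [Matrix.mul_apply, Matrix.trace_fin_two, Matrix.det_fin_two, Fin.sum_univ_two,
      Matrix.one_apply] <;> ring

theorem no_decay_from_squares (V : ℕ → EuclideanSpace ℝ (Fin 2))
    (hVne : ∀ n, V n ≠ 0) (τ : ℝ) (hτ : 1 ≤ τ)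
    (n : ℕ → ℕ) (hn : StrictMono n)
    (M : ℕ → Matrix (Fin 2) (Fin 2) ℝ)
    (hdet : ∀ k, (M k).det = 1) (htr : ∀ k, |(M k).trace| ≤ 2 * τ)
    (hV1 : ∀ k, V (n k) = Matrix.toEuclideanLin (M k) (V 0))
    (hV2 : ∀ k, V (2 * n k) = Matrix.toEuclideanLin (M k) (Matrix.toEuclideanLin (M k) (V 0))) :
    ¬ Tendsto V atTop (𝓝 0) := by
  intro h
  -- key identity: V 0 = trace • V (n k) - V (2 n k)
  have key : ∀ k, V 0 = (M k).trace • V (n k) - V (2 * n k) := by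
    intro k
    have hmul : Matrix.toEuclideanLin (M k) (Matrix.toEuclideanLin (M k) (V 0))
        = Matrix.toEuclideanLin (M k * M k) (V 0) := by
      rw [Matrix.toEuclideanLin_eq_toLin, Matrix.toLin_mul _ (PiLp.basisFun 2 ℝ (Fin 2)) _]
      rfl
    rw [hV2, hmul, cayley_fin_two, hdet, one_smul, map_sub, map_smul, hV1]
    simp [Matrix.toEuclideanLin_eq_toLin]
  -- both subsequences tend to 0
  have hnk : Tendsto (fun k => V (n k)) atTop (𝓝 0) :=
    h.comp hn.tendsto_atTop
  have h2nk : Tendsto (fun k => V (2 * n k)) atTop (𝓝 0) := by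
    refine h.comp ?_
    exact tendsto_atTop_mono (fun k => Nat.le_mul_of_pos_left _ (by norm_num))
      hn.tendsto_atTop
  have hsm : Tendsto (fun k => (M k).trace • V (n k)) atTop (𝓝 0) := by
    have hb : ∀ k, ‖(M k).trace • V (n k)‖ ≤ (2 * τ) * ‖V (n k)‖ := by
      intro k
      rw [norm_smul]
      exact mul_le_mul_of_nonneg_right ((Real.norm_eq_abs _) ▸ htr k) (norm_nonneg _)
    have : Tendsto (fun k => (2 * τ) * ‖V (n k)‖) atTop (𝓝 ((2 * τ) * 0)) :=
      (tendsto_const_nhds.mul (by simpa using hnk.norm))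
    rw [mul_zero] at this
    exact squeeze_zero_norm hb this
  have hlim : Tendsto (fun k => (M k).trace • V (n k) - V (2 * n k)) atTop (𝓝 0) := by
    simpa using hsm.sub h2nk
  have : Tendsto (fun _ : ℕ => V 0) atTop (𝓝 0) := by
    simpa using hlim.congr (fun k => (key k).symm)
  exact hVne 0 (tendsto_nhds_unique tendsto_const_nhds this)
end
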